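/- arXiv:cs/0101030 — 2 statements merged into one kernel-verified Lean document; each statement's English description precedes it below -/
import Mathlib

section
/- Let S1, S2, P' = x_1,…,x_{p'}, Q' = y_1,…,y_{q'} be as in the stated setting. For all indices i < p' and j < q', regardless of whether (x_i,y_j) is intersecting or nonintersecting, rr(S1^{x_i}, S2^{y_j}) = max{ mm(X_i,Y_j) + rr(S1^{x_{i+1}}, S2^{y_{j+1}}), mmb(X_i ∪ {x_{i+1}}, Y_j ∪ {y_{j+1}}, x_{i+1}, y_{j+1}), rr(S1^{x_i}, S2^{y_{j+1}}), mm(x_i, Y_j), rr(S1^{x_{i+1}}, S2^{y_j}), mm(X_i, y_j) }. -/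
/-- A leaf-labeled rooted tree: either a labeled leaf, or an internal
vertex with a list of subtrees. -/
inductive ETree (L : Type) : Type where
  | leaf : L → ETree L
  | node : List (ETree L) → ETree L

namespace ETree

variable {L : Type} [DecidableEq L]

/-- The list of leaf labels of a tree. -/
def labelList : ETree L → List L
  | leaf a => [a]
  | node ts => ts.attach.flatMap fun ⟨t, _⟩ => labelList t

/-- The label set of a tree: the set of its leaf labels. -/
def labelSet (t : ETree L) : Finset L := (labelList t).toFinset

/-- The list of children (as subtrees) of the root of a tree. -/
def children : ETree L → List (ETree L)
  | leaf _ => []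
  | node ts => ts

/-- A rooted tree is homeomorphic if every internal vertex has at least two children. -/
inductive Homeo : ETree L → Prop where
  | leaf (a : L) : Homeo (leaf a)
  | node (ts : List (ETree L)) (hlen : 2 ≤ ts.length) (h : ∀ t ∈ ts, Homeo t) :
      Homeo (node ts)

/-- An evolutionary tree: a homeomorphic rooted tree whose leaves carry distinct labels. -/
def IsEvolutionary (t : ETree L) : Prop := Homeo t ∧ (labelList t).Nodup

/-- `restrict t s` is the homeomorphic version `t‖s` of the tree obtained from `t` by
deleting all leaves with labels outside `s` (contracting away all vertices that are
not leaves or lowest common ancestors of two leaves); `none` if nothing remains. -/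
def restrict : ETree L → Finset L → Option (ETree L)
  | leaf a, s => if a ∈ s then some (leaf a) else none
  | node ts, s =>
      match ts.attach.filterMap (fun ⟨t, _⟩ => restrict t s) with
      | [] => none
      | [u] => some u
      | us => some (node us)

/-- Label-preserving isomorphism of leaf-labeled rooted trees. -/
inductive Iso : ETree L → ETree L → Prop where
  | leaf (a : L) : Iso (leaf a) (leaf a)
  | node (ts us : List (ETree L)) (e : Fin ts.length ≃ Fin us.length)
      (h : ∀ i : Fin ts.length, Iso (ts.get i) (us.get (e i))) :
      Iso (node ts) (node us)

/-- Isomorphism of possibly-empty trees. -/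
def IsoO : Option (ETree L) → Option (ETree L) → Prop
  | none, none => True
  | some t, some u => Iso t u
  | _, _ => False

/-- `rr T₁ T₂`: the number of leaves in a maximum agreement subtree of `T₁` and `T₂`,
i.e. the maximum cardinality of a subset `s` of the common labels such that `T₁‖s`
and `T₂‖s` are label-preservingly isomorphic. -/
noncomputable def rr (t₁ t₂ : ETree L) : ℕ :=
  sSup {k | ∃ s : Finset L, s ⊆ labelSet t₁ ∩ labelSet t₂ ∧ s.card = k ∧
    IsoO (restrict t₁ s) (restrict t₂ s)}

end ETree

namespace ETree

variable {L : Type} [DecidableEq L]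

noncomputable instance : DecidableEq (ETree L) := Classical.decEq _

/-- `mm U V`: the maximum weight of a matching of the complete bipartite graph
`(U, V, U×V)` in which the edge `(u,v)` has weight `rr u v` (note that in our
representation a vertex of a tree is identified with the subtree it roots, so the
weight of `(u,v)` is `rr` of the two rooted subtrees). -/
noncomputable def mm (U V : Finset (ETree L)) : ℕ :=
  sSup {w | ∃ M : Finset (ETree L × ETree L),
    (∀ p ∈ M, p.1 ∈ U ∧ p.2 ∈ V) ∧
    (∀ p ∈ M, ∀ q ∈ M, p ≠ q → p.1 ≠ q.1 ∧ p.2 ≠ q.2) ∧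
    w = ∑ p ∈ M, rr p.1 p.2}

/-- `mmb U V x y`: the maximum weight of a matching of the complete bipartite graph
`(U, V, U×V)` (edge `(u,v)` weighted by `rr u v`) that does not use the edge `(x,y)`. -/
noncomputable def mmb (U V : Finset (ETree L)) (x y : ETree L) : ℕ :=
  sSup {w | ∃ M : Finset (ETree L × ETree L),
    (∀ p ∈ M, p.1 ∈ U ∧ p.2 ∈ V) ∧
    (∀ p ∈ M, ∀ q ∈ M, p ≠ q → p.1 ≠ q.1 ∧ p.2 ≠ q.2) ∧
    (x, y) ∉ M ∧
    w = ∑ p ∈ M, rr p.1 p.2}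

/-- `IsSubtree s t`: `s` occurs as a rooted subtree `t^u` of `t` (vertices of a tree
with distinct leaf labels are identified with the subtrees they root). -/
inductive IsSubtree : ETree L → ETree L → Prop where
  | refl (t : ETree L) : IsSubtree t t
  | child {s c : ETree L} {ts : List (ETree L)} (hc : c ∈ ts) (h : IsSubtree s c) :
      IsSubtree s (node ts)

end ETree

/-- A root path `x₁,…,x_len` of a tree: a vertex-simple path starting at the root and
descending, containing no leaf of the tree.  Vertices are identified with the subtrees
they root, so `vert i` is the subtree `S^{xᵢ}` rooted at the `i`-th vertex of the path
(indices run from `1` to `len`). -/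
structure RootPath (L : Type) where
  /-- The ambient tree. -/
  tree : ETree L
  /-- The number of vertices of the path. -/
  len : ℕ
  /-- The subtree rooted at the `i`-th vertex of the path, for `1 ≤ i ≤ len`. -/
  vert : ℕ → ETree L
  len_pos : 1 ≤ len
  first : vert 1 = tree
  /-- The path contains no leaf of the tree. -/
  no_leaf : ∀ i, 1 ≤ i → i ≤ len → ∃ ts, vert i = ETree.node ts
  /-- Each path vertex after the first is a child of the previous one. -/
  step : ∀ i, 1 ≤ i → i < len → vert (i + 1) ∈ (vert i).children

namespace RootPath

variable {L : Type} [DecidableEq L]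

/-- `offPath P i` is the set of children of the path vertex `xᵢ` that are not on the
path (the set `Xᵢ`). -/
noncomputable def offPath (P : RootPath L) (i : ℕ) : Finset (ETree L) :=
  if i < P.len then ((P.vert i).children.toFinset).erase (P.vert (i + 1))
  else (P.vert i).children.toFinset

end RootPath

/-- `Intersecting P Q i j`: the pair `(xᵢ, y_j)` is intersecting, i.e. `S₁^u` and `S₂^v`
share a leaf label for some `u ∈ Xᵢ` and `v ∈ Y_j`. -/
def Intersecting {L : Type} [DecidableEq L] (P Q : RootPath L) (i j : ℕ) : Prop :=
  ∃ u ∈ P.offPath i, ∃ v ∈ Q.offPath j,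
    (ETree.labelSet u ∩ ETree.labelSet v).Nonempty

/-!
An agreement set `s` of two internal vertices `x`, `y` either lies inside a single child of `x`
or of `y`, or it meets at least two children on both sides. In the latter case the isomorphism of
the restrictions pairs each child of `x` met by `s` with a child of `y`, and these pairs form a
matching of the children whose weight is at least `|s|`. Conversely, since children have disjoint
label sets, optimal agreement sets of the pairs of any matching glue to an agreement set of `x`
and `y`. Hence `rr(x, y) = max(mm(children x, children y), max_d rr(x, d), max_c rr(c, y))`, and
the six terms of the recurrence split each of these three maxima according to whether the path
children `x_{i+1}` and `y_{j+1}` are used.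
-/

section Matching

variable {α β : Type*}

def IsMatching (U : Finset α) (V : Finset β) (M : Finset (α × β)) : Prop :=
  (∀ p ∈ M, p.1 ∈ U ∧ p.2 ∈ V) ∧ ∀ p ∈ M, ∀ q ∈ M, p ≠ q → p.1 ≠ q.1 ∧ p.2 ≠ q.2

variable {U : Finset α} {V : Finset β} {M : Finset (α × β)}

theorem isMatching_singleton {a : α} {b : β} (ha : a ∈ U) (hb : b ∈ V) :
    IsMatching U V {(a, b)} :=
  ⟨by simp [ha, hb], by simp⟩

theorem IsMatching.eq_of_fst_eq (hM : IsMatching U V M) {p q : α × β} (hp : p ∈ M) (hq : q ∈ M)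
    (h : p.1 = q.1) : p = q :=
  by_contra fun hpq => (hM.2 p hp q hq hpq).1 h

theorem IsMatching.eq_of_snd_eq (hM : IsMatching U V M) {p q : α × β} (hp : p ∈ M) (hq : q ∈ M)
    (h : p.2 = q.2) : p = q :=
  by_contra fun hpq => (hM.2 p hp q hq hpq).2 h

theorem IsMatching.card_le_one_of_left {a : α} (hM : IsMatching {a} V M) : M.card ≤ 1 :=
  Finset.card_le_one.2 fun p hp q hq => hM.eq_of_fst_eq hp hq <| by
    rw [Finset.mem_singleton.1 (hM.1 p hp).1, Finset.mem_singleton.1 (hM.1 q hq).1]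

theorem IsMatching.card_le_one_of_right {b : β} (hM : IsMatching U {b} M) : M.card ≤ 1 :=
  Finset.card_le_one.2 fun p hp q hq => hM.eq_of_snd_eq hp hq <| by
    rw [Finset.mem_singleton.1 (hM.1 p hp).2, Finset.mem_singleton.1 (hM.1 q hq).2]

theorem IsMatching.insert_insert [DecidableEq α] [DecidableEq β] {a : α} {b : β}
    (hM : IsMatching U V M) (ha : a ∉ U) (hb : b ∉ V) :
    IsMatching (insert a U) (insert b V) (insert (a, b) M) := by
  refine ⟨?_, ?_⟩
  · simp only [Finset.mem_insert, forall_eq_or_imp, true_or, and_self, true_and]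
    exact fun p hp => ⟨Or.inr (hM.1 p hp).1, Or.inr (hM.1 p hp).2⟩
  · have hout : ∀ p ∈ M, p.1 ≠ a ∧ p.2 ≠ b := fun p hp =>
      ⟨fun h => ha (h ▸ (hM.1 p hp).1), fun h => hb (h ▸ (hM.1 p hp).2)⟩
    simp only [Finset.mem_insert]
    rintro p (rfl | hp) q (rfl | hq) hpq
    · exact absurd rfl hpq
    · exact ⟨(hout q hq).1.symm, (hout q hq).2.symm⟩
    · exact hout p hp
    · exact hM.2 p hp q hq hpq

theorem IsMatching.erase_of_insert [DecidableEq α] [DecidableEq β] {a : α} {b : β}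
    (hM : IsMatching (insert a U) (insert b V) M) (hab : (a, b) ∈ M) :
    IsMatching U V (M.erase (a, b)) := by
  refine ⟨fun p hp => ?_, fun p hp q hq => hM.2 p (Finset.mem_of_mem_erase hp) q
    (Finset.mem_of_mem_erase hq)⟩
  obtain ⟨hpab, hp⟩ := Finset.mem_erase.1 hp
  obtain ⟨hp₁, hp₂⟩ := hM.2 p hp _ hab hpab
  exact ⟨Finset.mem_of_mem_insert_of_ne (hM.1 p hp).1 hp₁,
    Finset.mem_of_mem_insert_of_ne (hM.1 p hp).2 hp₂⟩

end Matching

namespace ETree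

open Function

section

variable {L : Type}

@[elab_as_elim]
theorem ind {motive : ETree L → Prop} (leaf : ∀ a, motive (.leaf a))
    (node : ∀ ts, (∀ t ∈ ts, motive t) → motive (.node ts)) : ∀ t, motive t
  | .leaf a => leaf a
  | .node ts => node ts fun t _ => ind leaf node t

theorem labelList_node (ts : List (ETree L)) : labelList (node ts) = ts.flatMap labelList := by
  rw [labelList, ← List.attach_map_subtype_val ts, List.flatMap_map]
  simp

theorem nodup_labelList_of_mem {ts : List (ETree L)} (h : (labelList (node ts)).Nodup)
    {t : ETree L} (ht : t ∈ ts) : (labelList t).Nodup := by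
  rw [labelList_node, List.nodup_flatMap] at h
  exact h.1 t ht

/-- The tree `restrict` builds from the list of its restricted children. -/
def ofList : List (ETree L) → Option (ETree L)
  | [] => none
  | [u] => some u
  | us => some (node us)

theorem isoO_some_left {u : ETree L} {o : Option (ETree L)} :
    IsoO (some u) o ↔ ∃ v, o = some v ∧ Iso u v := by
  cases o <;> simp [IsoO]

theorem isoO_some_right {v : ETree L} {o : Option (ETree L)} :
    IsoO o (some v) ↔ ∃ u, o = some u ∧ Iso u v := by
  cases o <;> simp [IsoO]

theorem isoO_ofList {l₁ l₂ : List (ETree L)} (e : Fin l₁.length ≃ Fin l₂.length)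
    (h : ∀ i, Iso (l₁.get i) (l₂.get (e i))) : IsoO (ofList l₁) (ofList l₂) := by
  have hlen : l₁.length = l₂.length := by simpa using Fintype.card_congr e
  match l₁, l₂, hlen with
  | [], [], _ => trivial
  | [_], [_], _ => simpa [ofList, IsoO, Fin.fin_one_eq_zero (e 0)] using h 0
  | _ :: _ :: _, _ :: _ :: _, _ => exact Iso.node _ _ e h

theorem exists_iso_of_isoO_ofList {l₁ l₂ : List (ETree L)} (h : IsoO (ofList l₁) (ofList l₂))
    (h₁ : l₁.length ≠ 1) (h₂ : l₂.length ≠ 1) : ∀ u ∈ l₁, ∃ v ∈ l₂, Iso u v := by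
  match l₁, l₂, h with
  | [], _, _ => simp
  | [_], _, _ => simp at h₁
  | _, [_], _ => simp at h₂
  | _ :: _ :: _, [], h => exact h.elim
  | _ :: _ :: _, _ :: _ :: _, h =>
    cases h with
    | node _ _ e h =>
      intro u hu
      obtain ⟨i, rfl⟩ := List.mem_iff_get.1 hu
      exact ⟨_, List.get_mem _ _, h i⟩

end

variable {L : Type} [DecidableEq L]

theorem mem_labelSet_node {a : L} {ts : List (ETree L)} :
    a ∈ labelSet (node ts) ↔ ∃ t ∈ ts, a ∈ labelSet t := by
  simp [labelSet, labelList_node]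

theorem labelSet_subset_node {c : ETree L} {ts : List (ETree L)} (hc : c ∈ ts) :
    labelSet c ⊆ labelSet (node ts) :=
  fun _ ha => mem_labelSet_node.2 ⟨c, hc, ha⟩

theorem pairwise_disjoint_labelSet {ts : List (ETree L)} (h : (labelList (node ts)).Nodup) :
    ts.Pairwise (Disjoint on labelSet) := by
  rw [labelList_node, List.nodup_flatMap] at h
  exact h.2.imp fun hd => List.disjoint_toFinset_iff_disjoint.2 hd

theorem eq_of_mem_labelSet {ts : List (ETree L)} (hts : ts.Pairwise (Disjoint on labelSet))
    {c c' : ETree L} (hc : c ∈ ts) (hc' : c' ∈ ts) {a : L} (ha : a ∈ labelSet c)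
    (ha' : a ∈ labelSet c') : c = c' := by
  by_contra hne
  exact Finset.disjoint_left.1 (hts.forall hc hc' hne) ha ha'

theorem eq_of_inter_labelSet_eq {ts : List (ETree L)} (hts : ts.Pairwise (Disjoint on labelSet))
    {c c' : ETree L} (hc : c ∈ ts) (hc' : c' ∈ ts) {s : Finset L}
    (h : labelSet c ∩ s = labelSet c' ∩ s) (hne : (labelSet c ∩ s).Nonempty) : c = c' := by
  obtain ⟨a, ha⟩ := hne
  exact eq_of_mem_labelSet hts hc hc' (Finset.mem_inter.1 ha).1
    (Finset.mem_inter.1 (h ▸ ha)).1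

theorem restrict_node (ts : List (ETree L)) (s : Finset L) :
    restrict (node ts) s = ofList (ts.filterMap (restrict · s)) := by
  have h : ts.attach.filterMap (fun t => restrict t.1 s) = ts.filterMap (restrict · s) := by
    rw [← List.attach_map_subtype_val ts, List.filterMap_map]
    simp
  rw [restrict, h]
  rcases ts.filterMap (restrict · s) with _ | ⟨_, _ | _⟩ <;> rfl

def olabelSet : Option (ETree L) → Finset L
  | none => ∅
  | some t => labelSet t

theorem olabelSet_ofList (l : List (ETree L)) : olabelSet (ofList l) = labelSet (node l) := by
  match l with
  | [] => simp [ofList, olabelSet, labelSet, labelList_node]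
  | [u] => ext; simp [ofList, olabelSet, mem_labelSet_node]
  | _ :: _ :: _ => rfl

theorem olabelSet_restrict (s : Finset L) (t : ETree L) :
    olabelSet (restrict t s) = labelSet t ∩ s := by
  induction t using ind with
  | leaf a =>
    by_cases h : a ∈ s <;> ext <;> simp [restrict, olabelSet, labelSet, labelList, h]
  | node ts ih =>
    have key : ∀ t ∈ ts, ∀ a, (∃ u, restrict t s = some u ∧ a ∈ labelSet u) ↔
        a ∈ labelSet t ∩ s := by
      intro t ht a
      rw [← ih t ht]
      cases restrict t s <;> simp [olabelSet]
    ext a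
    simp only [restrict_node, olabelSet_ofList, mem_labelSet_node, List.mem_filterMap,
      Finset.mem_inter]
    constructor
    · rintro ⟨u, ⟨t, ht, hu⟩, ha⟩
      have := (key t ht a).1 ⟨u, hu, ha⟩
      exact ⟨⟨t, ht, (Finset.mem_inter.1 this).1⟩, (Finset.mem_inter.1 this).2⟩
    · rintro ⟨⟨t, ht, hat⟩, has⟩
      obtain ⟨u, hu, ha⟩ := (key t ht a).2 (Finset.mem_inter.2 ⟨hat, has⟩)
      exact ⟨u, ⟨t, ht, hu⟩, ha⟩

theorem restrict_eq_none_of_inter_eq_empty {s : Finset L} (t : ETree L)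
    (h : labelSet t ∩ s = ∅) : restrict t s = none := by
  induction t using ind with
  | leaf a =>
    have : a ∉ s := fun ha => by simp [labelSet, labelList, ha] at h
    simp [restrict, this]
  | node ts ih =>
    have hnil : ts.filterMap (restrict · s) = [] := by
      refine List.filterMap_eq_nil_iff.2 fun t ht => ih t ht ?_
      exact Finset.subset_empty.1 (h ▸ Finset.inter_subset_inter_right (labelSet_subset_node ht))
    rw [restrict_node, hnil]
    rfl

theorem restrict_eq_none_iff {t : ETree L} {s : Finset L} :
    restrict t s = none ↔ labelSet t ∩ s = ∅ := by
  refine ⟨fun h => ?_, restrict_eq_none_of_inter_eq_empty t⟩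
  simpa [h, olabelSet] using (olabelSet_restrict s t).symm

theorem labelSet_of_restrict_eq_some {t u : ETree L} {s : Finset L}
    (h : restrict t s = some u) : labelSet u = labelSet t ∩ s := by
  simpa [h, olabelSet] using olabelSet_restrict s t

theorem labelSet_nonempty_of_restrict_eq_some {t u : ETree L} {s : Finset L}
    (h : restrict t s = some u) : (labelSet u).Nonempty := by
  rw [labelSet_of_restrict_eq_some h, Finset.nonempty_iff_ne_empty, Ne, ← restrict_eq_none_iff, h]
  simp

theorem exists_restrict_eq_some {t : ETree L} {s : Finset L} (h : (labelSet t ∩ s).Nonempty) :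
    ∃ u, restrict t s = some u := by
  rw [Finset.nonempty_iff_ne_empty, Ne, ← restrict_eq_none_iff, ← Ne,
    Option.ne_none_iff_exists'] at h
  exact h

theorem restrict_congr {s s' : Finset L} (t : ETree L)
    (h : labelSet t ∩ s = labelSet t ∩ s') : restrict t s = restrict t s' := by
  induction t using ind with
  | leaf a =>
    have : a ∈ s ↔ a ∈ s' := by simpa [labelSet, labelList, Finset.ext_iff] using h
    simp [restrict, this]
  | node ts ih =>
    rw [restrict_node, restrict_node, List.filterMap_congr fun t ht => ih t ht ?_]
    ext a
    have := Finset.ext_iff.1 h a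
    have : a ∈ labelSet t → a ∈ labelSet (node ts) := fun h => labelSet_subset_node ht h
    simp only [Finset.mem_inter] at *
    tauto

theorem restrict_inter_labelSet (t : ETree L) (s : Finset L) :
    restrict t (labelSet t ∩ s) = restrict t s :=
  restrict_congr t (by rw [← Finset.inter_assoc, Finset.inter_self])

theorem Iso.labelSet_eq {t u : ETree L} (h : Iso t u) : labelSet t = labelSet u := by
  induction h with
  | leaf a => rfl
  | node ts us e _ ih =>
    ext a
    simp only [mem_labelSet_node, List.mem_iff_get]
    constructor
    · rintro ⟨_, ⟨i, rfl⟩, ha⟩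
      exact ⟨_, ⟨e i, rfl⟩, ih i ▸ ha⟩
    · rintro ⟨_, ⟨j, rfl⟩, ha⟩
      exact ⟨_, ⟨e.symm j, rfl⟩, by rw [ih, e.apply_symm_apply]; exact ha⟩

theorem IsoO.olabelSet_eq {o₁ o₂ : Option (ETree L)} (h : IsoO o₁ o₂) :
    olabelSet o₁ = olabelSet o₂ := by
  match o₁, o₂, h with
  | none, none, _ => rfl
  | some _, some _, h => exact Iso.labelSet_eq h

theorem IsoO.inter_labelSet_eq {t₁ t₂ : ETree L} {s : Finset L}
    (h : IsoO (restrict t₁ s) (restrict t₂ s)) : labelSet t₁ ∩ s = labelSet t₂ ∩ s := by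
  rw [← olabelSet_restrict, ← olabelSet_restrict, h.olabelSet_eq]

theorem restrict_node_of_subset {ts : List (ETree L)} (hts : ts.Pairwise (Disjoint on labelSet))
    {c : ETree L} (hc : c ∈ ts) {s : Finset L} (hs : s ⊆ labelSet c) :
    restrict (node ts) s = restrict c s := by
  obtain ⟨ts₁, ts₂, rfl⟩ := List.append_of_mem hc
  have hnone : ∀ t, Disjoint (labelSet t) (labelSet c) → restrict t s = none := fun t ht =>
    restrict_eq_none_iff.2 (Finset.disjoint_iff_inter_eq_empty.1 (ht.mono_right hs))
  rw [List.pairwise_append, List.pairwise_cons] at hts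
  have h₁ : ts₁.filterMap (restrict · s) = [] := List.filterMap_eq_nil_iff.2 fun t ht =>
    hnone t (hts.2.2 t ht c List.mem_cons_self)
  have h₂ : ts₂.filterMap (restrict · s) = [] := List.filterMap_eq_nil_iff.2 fun t ht =>
    hnone t (hts.2.1.1 t ht).symm
  rw [restrict_node, List.filterMap_append, List.filterMap_cons, h₁, h₂]
  cases restrict c s <;> rfl

theorem exists_subset_of_filterMap_restrict_eq_singleton {ts : List (ETree L)} {s : Finset L}
    (hs : s ⊆ labelSet (node ts)) {u : ETree L} (h : ts.filterMap (restrict · s) = [u]) :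
    ∃ c ∈ ts, s ⊆ labelSet c := by
  obtain ⟨c, hc, hcu⟩ := List.mem_filterMap.1 (h ▸ List.mem_singleton_self u)
  refine ⟨c, hc, fun a ha => ?_⟩
  obtain ⟨t, ht, hat⟩ := mem_labelSet_node.1 (hs ha)
  obtain ⟨v, hv⟩ := exists_restrict_eq_some ⟨a, Finset.mem_inter.2 ⟨hat, ha⟩⟩
  have hvu : v ∈ ts.filterMap (restrict · s) := List.mem_filterMap.2 ⟨t, ht, hv⟩
  rw [h, List.mem_singleton] at hvu
  subst hvu
  have hav : a ∈ labelSet v := by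
    rw [labelSet_of_restrict_eq_some hv]
    exact Finset.mem_inter.2 ⟨hat, ha⟩
  rw [labelSet_of_restrict_eq_some hcu] at hav
  exact (Finset.mem_inter.1 hav).1

theorem pairwise_disjoint_filterMap_restrict {ts : List (ETree L)}
    (hts : ts.Pairwise (Disjoint on labelSet)) (s : Finset L) :
    (ts.filterMap (restrict · s)).Pairwise (Disjoint on labelSet) :=
  hts.filterMap _ fun _ _ h _ hu _ hu' => by
    simp only [onFun, labelSet_of_restrict_eq_some hu, labelSet_of_restrict_eq_some hu']
    exact h.mono Finset.inter_subset_left Finset.inter_subset_left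

theorem eq_of_labelSet_get_eq {l : List (ETree L)} (hl : l.Pairwise (Disjoint on labelSet))
    (hne : ∀ u ∈ l, (labelSet u).Nonempty) {i j : Fin l.length}
    (h : labelSet (l.get i) = labelSet (l.get j)) : i = j := by
  by_contra hij
  obtain ⟨a, ha⟩ := hne _ (List.get_mem l i)
  have hd : Disjoint (labelSet (l.get i)) (labelSet (l.get j)) := by
    rcases lt_or_gt_of_ne hij with hlt | hlt
    · exact List.pairwise_iff_get.1 hl i j hlt
    · exact (List.pairwise_iff_get.1 hl j i hlt).symm
  exact Finset.disjoint_left.1 hd ha (h ▸ ha)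

theorem isoO_ofList_of_forall_exists_iso {l₁ l₂ : List (ETree L)}
    (hl₁ : l₁.Pairwise (Disjoint on labelSet)) (hl₂ : l₂.Pairwise (Disjoint on labelSet))
    (hne₁ : ∀ u ∈ l₁, (labelSet u).Nonempty) (hne₂ : ∀ v ∈ l₂, (labelSet v).Nonempty)
    (h₁₂ : ∀ u ∈ l₁, ∃ v ∈ l₂, Iso u v) (h₂₁ : ∀ v ∈ l₂, ∃ u ∈ l₁, Iso u v) :
    IsoO (ofList l₁) (ofList l₂) := by
  have hf : ∀ i : Fin l₁.length, ∃ j, Iso (l₁.get i) (l₂.get j) := fun i => by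
    obtain ⟨v, hv, hiso⟩ := h₁₂ _ (List.get_mem l₁ i)
    obtain ⟨j, rfl⟩ := List.mem_iff_get.1 hv
    exact ⟨j, hiso⟩
  have hg : ∀ j : Fin l₂.length, ∃ i, Iso (l₁.get i) (l₂.get j) := fun j => by
    obtain ⟨u, hu, hiso⟩ := h₂₁ _ (List.get_mem l₂ j)
    obtain ⟨i, rfl⟩ := List.mem_iff_get.1 hu
    exact ⟨i, hiso⟩
  choose f hf using hf
  choose g hg using hg
  have hf_inj : Injective f := fun i i' h => eq_of_labelSet_get_eq hl₁ hne₁ <| by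
    rw [(hf i).labelSet_eq, (hf i').labelSet_eq, h]
  have hg_inj : Injective g := fun j j' h => eq_of_labelSet_get_eq hl₂ hne₂ <| by
    rw [← (hg j).labelSet_eq, ← (hg j').labelSet_eq, h]
  have hcard := (Fintype.card_le_of_injective f hf_inj).antisymm
    (Fintype.card_le_of_injective g hg_inj)
  exact isoO_ofList
    (Equiv.ofBijective f ((Fintype.bijective_iff_injective_and_card f).2 ⟨hf_inj, hcard⟩)) hf

/-- Two restrictions of nodes are isomorphic as soon as every restricted child on either side has
an isomorphic partner on the other side: the partner is unique since children have disjoint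
labels, so these partners assemble into a bijection of the restricted children. -/
theorem isoO_restrict_node {ts us : List (ETree L)} (hts : ts.Pairwise (Disjoint on labelSet))
    (hus : us.Pairwise (Disjoint on labelSet)) {s : Finset L}
    (h₁ : ∀ c ∈ ts, (labelSet c ∩ s).Nonempty → ∃ d ∈ us, IsoO (restrict c s) (restrict d s))
    (h₂ : ∀ d ∈ us, (labelSet d ∩ s).Nonempty → ∃ c ∈ ts, IsoO (restrict c s) (restrict d s)) :
    IsoO (restrict (node ts) s) (restrict (node us) s) := by
  have hne : ∀ ts : List (ETree L), ∀ u ∈ ts.filterMap (restrict · s), (labelSet u).Nonempty :=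
    fun ts u hu => by
      obtain ⟨_, _, hu⟩ := List.mem_filterMap.1 hu
      exact labelSet_nonempty_of_restrict_eq_some hu
  rw [restrict_node, restrict_node]
  refine isoO_ofList_of_forall_exists_iso (pairwise_disjoint_filterMap_restrict hts s)
    (pairwise_disjoint_filterMap_restrict hus s) (hne ts) (hne us) ?_ ?_
  · intro u hu
    obtain ⟨c, hc, hcu⟩ := List.mem_filterMap.1 hu
    obtain ⟨d, hd, hiso⟩ := h₁ c hc (labelSet_of_restrict_eq_some hcu ▸ hne ts u hu)
    obtain ⟨v, hdv, huv⟩ := isoO_some_left.1 (hcu ▸ hiso)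
    exact ⟨v, List.mem_filterMap.2 ⟨d, hd, hdv⟩, huv⟩
  · intro v hv
    obtain ⟨d, hd, hdv⟩ := List.mem_filterMap.1 hv
    obtain ⟨c, hc, hiso⟩ := h₂ d hd (labelSet_of_restrict_eq_some hdv ▸ hne us v hv)
    obtain ⟨u, hcu, huv⟩ := isoO_some_right.1 (hdv ▸ hiso)
    exact ⟨u, List.mem_filterMap.2 ⟨c, hc, hcu⟩, huv⟩

theorem exists_isoO_of_isoO_restrict_node {ts us : List (ETree L)} {s : Finset L}
    (hs : s ⊆ labelSet (node ts) ∩ labelSet (node us))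
    (hiso : IsoO (restrict (node ts) s) (restrict (node us) s))
    (hspread₁ : ∀ c ∈ ts, ¬s ⊆ labelSet c) (hspread₂ : ∀ d ∈ us, ¬s ⊆ labelSet d) :
    ∀ c ∈ ts, (labelSet c ∩ s).Nonempty → ∃ d ∈ us, IsoO (restrict c s) (restrict d s) := by
  have hlen : ∀ ts : List (ETree L), s ⊆ labelSet (node ts) → (∀ c ∈ ts, ¬s ⊆ labelSet c) →
      (ts.filterMap (restrict · s)).length ≠ 1 := fun ts hs hspread hlen => by
    obtain ⟨u, hu⟩ := List.length_eq_one_iff.1 hlen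
    obtain ⟨c, hc, hsc⟩ := exists_subset_of_filterMap_restrict_eq_singleton hs hu
    exact hspread c hc hsc
  rw [restrict_node, restrict_node] at hiso
  have hcorr := exists_iso_of_isoO_ofList hiso
    (hlen ts (hs.trans Finset.inter_subset_left) hspread₁)
    (hlen us (hs.trans Finset.inter_subset_right) hspread₂)
  intro c hc hcs
  obtain ⟨u, hu⟩ := exists_restrict_eq_some hcs
  obtain ⟨v, hv, huv⟩ := hcorr u (List.mem_filterMap.2 ⟨c, hc, hu⟩)
  obtain ⟨d, hd, hdv⟩ := List.mem_filterMap.1 hv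
  exact ⟨d, hd, by rw [hu, hdv]; exact huv⟩

theorem rr_set_bddAbove (t₁ t₂ : ETree L) :
    BddAbove {k | ∃ s : Finset L, s ⊆ labelSet t₁ ∩ labelSet t₂ ∧ s.card = k ∧
      IsoO (restrict t₁ s) (restrict t₂ s)} :=
  ⟨(labelSet t₁ ∩ labelSet t₂).card, by rintro _ ⟨s, hs, rfl, -⟩; exact Finset.card_le_card hs⟩

theorem le_rr {t₁ t₂ : ETree L} {s : Finset L} (hs : s ⊆ labelSet t₁ ∩ labelSet t₂)
    (hiso : IsoO (restrict t₁ s) (restrict t₂ s)) : s.card ≤ rr t₁ t₂ :=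
  le_csSup (rr_set_bddAbove t₁ t₂) ⟨s, hs, rfl, hiso⟩

theorem exists_rr (t₁ t₂ : ETree L) : ∃ s : Finset L, s ⊆ labelSet t₁ ∩ labelSet t₂ ∧
    s.card = rr t₁ t₂ ∧ IsoO (restrict t₁ s) (restrict t₂ s) := by
  have h₀ : IsoO (restrict t₁ ∅) (restrict t₂ ∅) := by
    rw [restrict_eq_none_iff.2 (Finset.inter_empty _),
      restrict_eq_none_iff.2 (Finset.inter_empty _)]
    trivial
  exact (Nat.sSup_mem ⟨0, ∅, Finset.empty_subset _, rfl, h₀⟩ (rr_set_bddAbove t₁ t₂) :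
    rr t₁ t₂ ∈ _)

theorem card_inter_le_rr {t₁ t₂ : ETree L} {s : Finset L}
    (h : IsoO (restrict t₁ s) (restrict t₂ s)) : (labelSet t₁ ∩ s).card ≤ rr t₁ t₂ := by
  refine le_rr (fun a ha => ?_) ?_
  · have ha₂ := h.inter_labelSet_eq ▸ ha
    exact Finset.mem_inter.2 ⟨(Finset.mem_inter.1 ha).1, (Finset.mem_inter.1 ha₂).1⟩
  · rwa [restrict_inter_labelSet, h.inter_labelSet_eq, restrict_inter_labelSet]

theorem rr_le_rr_node_left {ts : List (ETree L)} (hts : ts.Pairwise (Disjoint on labelSet))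
    {c : ETree L} (hc : c ∈ ts) (t : ETree L) : rr c t ≤ rr (node ts) t := by
  obtain ⟨s, hs, hcard, hiso⟩ := exists_rr c t
  rw [← hcard]
  refine le_rr (hs.trans (Finset.inter_subset_inter (labelSet_subset_node hc) subset_rfl)) ?_
  rwa [restrict_node_of_subset hts hc (hs.trans Finset.inter_subset_left)]

theorem rr_le_rr_node_right {us : List (ETree L)} (hus : us.Pairwise (Disjoint on labelSet))
    {d : ETree L} (hd : d ∈ us) (t : ETree L) : rr t d ≤ rr t (node us) := by
  obtain ⟨s, hs, hcard, hiso⟩ := exists_rr t d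
  rw [← hcard]
  refine le_rr (hs.trans (Finset.inter_subset_inter subset_rfl (labelSet_subset_node hd))) ?_
  rwa [restrict_node_of_subset hus hd (hs.trans Finset.inter_subset_right)]

variable {U V : Finset (ETree L)} {M : Finset (ETree L × ETree L)}

theorem mm_set_bddAbove (U V : Finset (ETree L)) :
    BddAbove {w | ∃ M : Finset (ETree L × ETree L), (∀ p ∈ M, p.1 ∈ U ∧ p.2 ∈ V) ∧
      (∀ p ∈ M, ∀ q ∈ M, p ≠ q → p.1 ≠ q.1 ∧ p.2 ≠ q.2) ∧ w = ∑ p ∈ M, rr p.1 p.2} :=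
  ⟨∑ p ∈ U ×ˢ V, rr p.1 p.2, by
    rintro _ ⟨M, hM, -, rfl⟩
    exact Finset.sum_le_sum_of_subset fun p hp => Finset.mem_product.2 (hM p hp)⟩

theorem le_mm (hM : IsMatching U V M) : ∑ p ∈ M, rr p.1 p.2 ≤ mm U V :=
  le_csSup (mm_set_bddAbove U V) ⟨M, hM.1, hM.2, rfl⟩

theorem exists_mm (U V : Finset (ETree L)) :
    ∃ M, IsMatching U V M ∧ ∑ p ∈ M, rr p.1 p.2 = mm U V := by
  obtain ⟨M, h₁, h₂, h⟩ : mm U V ∈ _ :=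
    Nat.sSup_mem ⟨0, ∅, by simp, by simp, by simp⟩ (mm_set_bddAbove U V)
  exact ⟨M, ⟨h₁, h₂⟩, h.symm⟩

theorem mmb_set_bddAbove (U V : Finset (ETree L)) (x y : ETree L) :
    BddAbove {w | ∃ M : Finset (ETree L × ETree L), (∀ p ∈ M, p.1 ∈ U ∧ p.2 ∈ V) ∧
      (∀ p ∈ M, ∀ q ∈ M, p ≠ q → p.1 ≠ q.1 ∧ p.2 ≠ q.2) ∧ (x, y) ∉ M ∧
      w = ∑ p ∈ M, rr p.1 p.2} :=
  ⟨∑ p ∈ U ×ˢ V, rr p.1 p.2, by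
    rintro _ ⟨M, hM, -, -, rfl⟩
    exact Finset.sum_le_sum_of_subset fun p hp => Finset.mem_product.2 (hM p hp)⟩

theorem le_mmb {x y : ETree L} (hM : IsMatching U V M) (hxy : (x, y) ∉ M) :
    ∑ p ∈ M, rr p.1 p.2 ≤ mmb U V x y :=
  le_csSup (mmb_set_bddAbove U V x y) ⟨M, hM.1, hM.2, hxy, rfl⟩

theorem mmb_le_mm (U V : Finset (ETree L)) (x y : ETree L) : mmb U V x y ≤ mm U V := by
  obtain ⟨M, h₁, h₂, -, h⟩ : mmb U V x y ∈ _ :=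
    Nat.sSup_mem ⟨0, ∅, by simp, by simp, by simp, by simp⟩ (mmb_set_bddAbove U V x y)
  exact h.trans_le (le_mm ⟨h₁, h₂⟩)

theorem mm_insert_insert {a b : ETree L} (ha : a ∉ U) (hb : b ∉ V) :
    mm (insert a U) (insert b V) = max (mm U V + rr a b) (mmb (insert a U) (insert b V) a b) := by
  refine le_antisymm ?_ (max_le ?_ (mmb_le_mm _ _ a b))
  · obtain ⟨M, hM, hsum⟩ := exists_mm (insert a U) (insert b V)
    rw [← hsum]
    by_cases hab : (a, b) ∈ M
    · have := le_mm (hM.erase_of_insert hab)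
      rw [← Finset.add_sum_erase M _ hab]
      dsimp only
      omega
    · exact le_max_of_le_right (le_mmb hM hab)
  · obtain ⟨M, hM, hsum⟩ := exists_mm U V
    have hab : (a, b) ∉ M := fun h => ha (hM.1 _ h).1
    calc mm U V + rr a b = ∑ p ∈ insert (a, b) M, rr p.1 p.2 := by
          rw [Finset.sum_insert hab, hsum, add_comm]
      _ ≤ _ := le_mm (hM.insert_insert ha hb)

theorem mm_singleton_left (u : ETree L) (V : Finset (ETree L)) : mm {u} V = V.sup (rr u) := by
  refine le_antisymm ?_ (Finset.sup_le fun v hv => ?_)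
  · obtain ⟨M, hM, hsum⟩ := exists_mm {u} V
    rw [← hsum]
    calc ∑ p ∈ M, rr p.1 p.2 ≤ M.card • V.sup (rr u) :=
          Finset.sum_le_card_nsmul _ _ _ fun p hp => by
            obtain ⟨hu, hv⟩ := hM.1 p hp
            rw [Finset.mem_singleton.1 hu]
            exact Finset.le_sup hv
      _ ≤ 1 • V.sup (rr u) := by gcongr; exact hM.card_le_one_of_left
      _ = V.sup (rr u) := one_smul _ _
  · simpa using le_mm (isMatching_singleton (Finset.mem_singleton_self u) hv)

theorem mm_singleton_right (U : Finset (ETree L)) (v : ETree L) :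
    mm U {v} = U.sup fun u => rr u v := by
  refine le_antisymm ?_ (Finset.sup_le fun u hu => ?_)
  · obtain ⟨M, hM, hsum⟩ := exists_mm U {v}
    rw [← hsum]
    calc ∑ p ∈ M, rr p.1 p.2 ≤ M.card • U.sup fun u => rr u v :=
          Finset.sum_le_card_nsmul _ _ _ fun p hp => by
            obtain ⟨hu, hv⟩ := hM.1 p hp
            rw [Finset.mem_singleton.1 hv]
            exact Finset.le_sup (f := fun u => rr u v) hu
      _ ≤ 1 • U.sup fun u => rr u v := by gcongr; exact hM.card_le_one_of_right
      _ = U.sup fun u => rr u v := one_smul _ _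
  · simpa using le_mm (isMatching_singleton hu (Finset.mem_singleton_self v))

/-- An agreement set spread over several children on both sides: pairing each child with the
child its restriction is isomorphic to gives a matching of weight at least `s.card`. -/
theorem card_le_mm_of_forall_exists_isoO {ts us : List (ETree L)}
    (hts : ts.Pairwise (Disjoint on labelSet)) (hus : us.Pairwise (Disjoint on labelSet))
    {s : Finset L} (hs : s ⊆ labelSet (node ts))
    (h : ∀ c ∈ ts, (labelSet c ∩ s).Nonempty → ∃ d ∈ us, IsoO (restrict c s) (restrict d s)) :
    s.card ≤ mm ts.toFinset us.toFinset := by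
  classical
  set M := (ts.toFinset ×ˢ us.toFinset).filter fun p =>
    (labelSet p.1 ∩ s).Nonempty ∧ IsoO (restrict p.1 s) (restrict p.2 s)
  have hmemM : ∀ {p : ETree L × ETree L}, p ∈ M ↔ (p.1 ∈ ts ∧ p.2 ∈ us) ∧
      (labelSet p.1 ∩ s).Nonempty ∧ IsoO (restrict p.1 s) (restrict p.2 s) := by
    simp [M]
  have hM : IsMatching ts.toFinset us.toFinset M := by
    refine ⟨fun p hp => by simpa using (hmemM.1 hp).1, fun p hp q hq hpq => ?_⟩
    obtain ⟨⟨hp₁, hp₂⟩, hpne, hpiso⟩ := hmemM.1 hp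
    obtain ⟨⟨hq₁, hq₂⟩, -, hqiso⟩ := hmemM.1 hq
    refine ⟨fun h₁ => hpq (Prod.ext h₁ ?_), fun h₂ => hpq (Prod.ext ?_ h₂)⟩
    · refine eq_of_inter_labelSet_eq hus hp₂ hq₂ ?_ (hpiso.inter_labelSet_eq ▸ hpne)
      rw [← hpiso.inter_labelSet_eq, h₁, hqiso.inter_labelSet_eq]
    · refine eq_of_inter_labelSet_eq hts hp₁ hq₁ ?_ hpne
      rw [hpiso.inter_labelSet_eq, h₂, ← hqiso.inter_labelSet_eq]
  have hcover : M.biUnion (fun p => labelSet p.1 ∩ s) = s := by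
    refine Finset.Subset.antisymm (Finset.biUnion_subset.2 fun _ _ => Finset.inter_subset_right)
      fun a ha => ?_
    obtain ⟨c, hc, hac⟩ := mem_labelSet_node.1 (hs ha)
    have hcs : (labelSet c ∩ s).Nonempty := ⟨a, Finset.mem_inter.2 ⟨hac, ha⟩⟩
    obtain ⟨d, hd, hiso⟩ := h c hc hcs
    exact Finset.mem_biUnion.2 ⟨(c, d), hmemM.2 ⟨⟨hc, hd⟩, hcs, hiso⟩, Finset.mem_inter.2 ⟨hac, ha⟩⟩
  have hdisj : (M : Set (ETree L × ETree L)).PairwiseDisjoint fun p => labelSet p.1 ∩ s :=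
    fun p hp q hq hpq => by
      have hd := hts.forall (hmemM.1 hp).1.1 (hmemM.1 hq).1.1 (hM.2 p hp q hq hpq).1
      exact hd.mono Finset.inter_subset_left Finset.inter_subset_left
  calc s.card = (M.biUnion fun p => labelSet p.1 ∩ s).card := by rw [hcover]
    _ = ∑ p ∈ M, (labelSet p.1 ∩ s).card := Finset.card_biUnion hdisj
    _ ≤ ∑ p ∈ M, rr p.1 p.2 := Finset.sum_le_sum fun p hp => card_inter_le_rr (hmemM.1 hp).2.2
    _ ≤ mm ts.toFinset us.toFinset := le_mm hM

theorem labelSet_inter_biUnion {ι : Type*} {ts : List (ETree L)}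
    (hts : ts.Pairwise (Disjoint on labelSet)) {M : Finset ι} {f : ι → ETree L}
    (hf : ∀ p ∈ M, f p ∈ ts) (hinj : Set.InjOn f M) {σ : ι → Finset L}
    (hσ : ∀ p, σ p ⊆ labelSet (f p)) {p : ι} (hp : p ∈ M) :
    labelSet (f p) ∩ M.biUnion σ = σ p := by
  refine Finset.Subset.antisymm (fun a ha => ?_)
    (Finset.subset_inter (hσ p) (Finset.subset_biUnion_of_mem σ hp))
  obtain ⟨q, hq, haq⟩ := Finset.mem_biUnion.1 (Finset.mem_inter.1 ha).2
  obtain rfl : p = q := hinj hp hq <|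
    eq_of_mem_labelSet hts (hf p hp) (hf q hq) (Finset.mem_inter.1 ha).1 (hσ q haq)
  exact haq

/-- Agreement sets of the matched pairs of children glue to an agreement set of the two nodes:
a child meeting the union meets it only in the agreement set of its own pair. -/
theorem isoO_restrict_node_biUnion {ts us : List (ETree L)}
    (hts : ts.Pairwise (Disjoint on labelSet)) (hus : us.Pairwise (Disjoint on labelSet))
    {M : Finset (ETree L × ETree L)} (hM : IsMatching ts.toFinset us.toFinset M)
    {σ : ETree L × ETree L → Finset L} (hσ : ∀ p, σ p ⊆ labelSet p.1 ∩ labelSet p.2)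
    (hσiso : ∀ p, IsoO (restrict p.1 (σ p)) (restrict p.2 (σ p))) :
    IsoO (restrict (node ts) (M.biUnion σ)) (restrict (node us) (M.biUnion σ)) := by
  set s := M.biUnion σ
  have hM₁ : ∀ p ∈ M, p.1 ∈ ts ∧ p.2 ∈ us := fun p hp => by simpa using hM.1 p hp
  have hσ₁ : ∀ p, σ p ⊆ labelSet p.1 := fun p => (hσ p).trans Finset.inter_subset_left
  have hσ₂ : ∀ p, σ p ⊆ labelSet p.2 := fun p => (hσ p).trans Finset.inter_subset_right
  have hmem : ∀ a ∈ s, ∃ p ∈ M, a ∈ σ p := fun a ha => Finset.mem_biUnion.1 ha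
  have hfst : ∀ p ∈ M, labelSet p.1 ∩ s = σ p := fun p hp =>
    labelSet_inter_biUnion hts (fun p hp => (hM₁ p hp).1) (fun _ hp _ hq => hM.eq_of_fst_eq hp hq)
      hσ₁ hp
  have hsnd : ∀ p ∈ M, labelSet p.2 ∩ s = σ p := fun p hp =>
    labelSet_inter_biUnion hus (fun p hp => (hM₁ p hp).2) (fun _ hp _ hq => hM.eq_of_snd_eq hp hq)
      hσ₂ hp
  have hiso : ∀ p ∈ M, IsoO (restrict p.1 s) (restrict p.2 s) := fun p hp => by
    rw [← restrict_inter_labelSet p.1, hfst p hp, ← restrict_inter_labelSet p.2, hsnd p hp]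
    exact hσiso p
  refine isoO_restrict_node hts hus (fun c hc ⟨a, ha⟩ => ?_) fun d hd ⟨a, ha⟩ => ?_
  · obtain ⟨p, hp, hap⟩ := hmem a (Finset.mem_inter.1 ha).2
    obtain rfl := eq_of_mem_labelSet hts (hM₁ p hp).1 hc (hσ₁ p hap) (Finset.mem_inter.1 ha).1
    exact ⟨p.2, (hM₁ p hp).2, hiso p hp⟩
  · obtain ⟨p, hp, hap⟩ := hmem a (Finset.mem_inter.1 ha).2
    obtain rfl := eq_of_mem_labelSet hus (hM₁ p hp).2 hd (hσ₂ p hap) (Finset.mem_inter.1 ha).1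
    exact ⟨p.1, (hM₁ p hp).1, hiso p hp⟩

theorem mm_le_rr_node {ts us : List (ETree L)} (hts : ts.Pairwise (Disjoint on labelSet))
    (hus : us.Pairwise (Disjoint on labelSet)) :
    mm ts.toFinset us.toFinset ≤ rr (node ts) (node us) := by
  obtain ⟨M, hM, hsum⟩ := exists_mm ts.toFinset us.toFinset
  have hM₁ : ∀ p ∈ M, p.1 ∈ ts ∧ p.2 ∈ us := fun p hp => by simpa using hM.1 p hp
  choose σ hσ hσcard hσiso using fun p : ETree L × ETree L => exists_rr p.1 p.2
  have hsub : M.biUnion σ ⊆ labelSet (node ts) ∩ labelSet (node us) :=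
    Finset.biUnion_subset.2 fun p hp => (hσ p).trans <|
      Finset.inter_subset_inter (labelSet_subset_node (hM₁ p hp).1)
        (labelSet_subset_node (hM₁ p hp).2)
  have hdisj : (M : Set (ETree L × ETree L)).PairwiseDisjoint σ := fun p hp q hq hpq =>
    (hts.forall (hM₁ p hp).1 (hM₁ q hq).1 (hM.2 p hp q hq hpq).1).mono
      ((hσ p).trans Finset.inter_subset_left) ((hσ q).trans Finset.inter_subset_left)
  calc mm ts.toFinset us.toFinset = ∑ p ∈ M, (σ p).card := by simp only [← hsum, hσcard]
    _ = (M.biUnion σ).card := (Finset.card_biUnion hdisj).symm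
    _ ≤ rr (node ts) (node us) := le_rr hsub (isoO_restrict_node_biUnion hts hus hM hσ hσiso)

theorem rr_node_le {ts us : List (ETree L)} (hts : ts.Pairwise (Disjoint on labelSet))
    (hus : us.Pairwise (Disjoint on labelSet)) :
    rr (node ts) (node us) ≤ max (mm ts.toFinset us.toFinset)
      (max (us.toFinset.sup (rr (node ts))) (ts.toFinset.sup fun c => rr c (node us))) := by
  obtain ⟨s, hs, hcard, hiso⟩ := exists_rr (node ts) (node us)
  rw [← hcard]
  by_cases hts_sub : ∃ c ∈ ts, s ⊆ labelSet c
  · obtain ⟨c, hc, hsc⟩ := hts_sub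
    rw [restrict_node_of_subset hts hc hsc] at hiso
    have h := card_inter_le_rr hiso
    rw [Finset.inter_eq_right.2 hsc] at h
    exact le_max_of_le_right <| le_max_of_le_right <|
      h.trans (Finset.le_sup (f := fun c => rr c (node us)) (List.mem_toFinset.2 hc))
  by_cases hus_sub : ∃ d ∈ us, s ⊆ labelSet d
  · obtain ⟨d, hd, hsd⟩ := hus_sub
    rw [restrict_node_of_subset hus hd hsd] at hiso
    have h := card_inter_le_rr hiso
    rw [Finset.inter_eq_right.2 (hs.trans Finset.inter_subset_left)] at h
    exact le_max_of_le_right <| le_max_of_le_left <|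
      h.trans (Finset.le_sup (List.mem_toFinset.2 hd))
  push Not at hts_sub hus_sub
  exact le_max_of_le_left <| card_le_mm_of_forall_exists_isoO hts hus
    (hs.trans Finset.inter_subset_left) (exists_isoO_of_isoO_restrict_node hs hiso hts_sub hus_sub)

theorem rr_node_node {ts us : List (ETree L)} (hts : ts.Pairwise (Disjoint on labelSet))
    (hus : us.Pairwise (Disjoint on labelSet)) :
    rr (node ts) (node us) = max (mm ts.toFinset us.toFinset)
      (max (us.toFinset.sup (rr (node ts))) (ts.toFinset.sup fun c => rr c (node us))) :=
  (rr_node_le hts hus).antisymm <| max_le (mm_le_rr_node hts hus) <| max_le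
    (Finset.sup_le fun _ hd => rr_le_rr_node_right hus (List.mem_toFinset.1 hd) _)
    (Finset.sup_le fun _ hc => rr_le_rr_node_left hts (List.mem_toFinset.1 hc) _)

end ETree

namespace RootPath

variable {L : Type}

theorem nodup_labelList_vert (P : RootPath L) (h : (ETree.labelList P.tree).Nodup) :
    ∀ i, 1 ≤ i → i ≤ P.len → (ETree.labelList (P.vert i)).Nodup
  | 0, h₀, _ => absurd h₀ (by omega)
  | 1, _, _ => P.first ▸ h
  | i + 2, _, hi => by
    obtain ⟨ts, hts⟩ := P.no_leaf (i + 1) (by omega) (by omega)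
    have hstep := P.step (i + 1) (by omega) (by omega)
    have hnd := P.nodup_labelList_vert h (i + 1) (by omega) (by omega)
    rw [hts] at hstep hnd
    exact ETree.nodup_labelList_of_mem hnd hstep

theorem vert_succ_notMem_offPath (P : RootPath L) {i : ℕ} (hi : i < P.len) :
    P.vert (i + 1) ∉ P.offPath i := by
  simp [offPath, hi]

theorem insert_vert_succ_offPath (P : RootPath L) {i : ℕ} (hi₁ : 1 ≤ i) (hi : i < P.len)
    {ts : List (ETree L)} (hx : P.vert i = ETree.node ts) :
    insert (P.vert (i + 1)) (P.offPath i) = ts.toFinset := by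
  have hstep := P.step i hi₁ hi
  rw [hx] at hstep
  rw [offPath, if_pos hi, hx]
  exact Finset.insert_erase (List.mem_toFinset.2 hstep)

end RootPath

open ETree in
theorem rr_recurrence_general {L : Type} [DecidableEq L] (P Q : RootPath L)
    (hS₁ : ETree.IsEvolutionary P.tree) (hS₂ : ETree.IsEvolutionary Q.tree)
    (i j : ℕ) (hi₁ : 1 ≤ i) (hi : i < P.len) (hj₁ : 1 ≤ j) (hj : j < Q.len) :
    rr (P.vert i) (Q.vert j) =
      max (mm (P.offPath i) (Q.offPath j) + rr (P.vert (i + 1)) (Q.vert (j + 1)))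
      (max (mmb (insert (P.vert (i + 1)) (P.offPath i))
               (insert (Q.vert (j + 1)) (Q.offPath j))
               (P.vert (i + 1)) (Q.vert (j + 1)))
      (max (rr (P.vert i) (Q.vert (j + 1)))
      (max (mm {P.vert i} (Q.offPath j))
      (max (rr (P.vert (i + 1)) (Q.vert j))
           (mm (P.offPath i) {Q.vert j}))))) := by
  obtain ⟨ts, hx⟩ := P.no_leaf i hi₁ hi.le
  obtain ⟨us, hy⟩ := Q.no_leaf j hj₁ hj.le
  have hts := pairwise_disjoint_labelSet (hx ▸ P.nodup_labelList_vert hS₁.2 i hi₁ hi.le)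
  have hus := pairwise_disjoint_labelSet (hy ▸ Q.nodup_labelList_vert hS₂.2 j hj₁ hj.le)
  rw [hx, hy, rr_node_node hts hus, ← P.insert_vert_succ_offPath hi₁ hi hx,
    ← Q.insert_vert_succ_offPath hj₁ hj hy,
    mm_insert_insert (P.vert_succ_notMem_offPath hi) (Q.vert_succ_notMem_offPath hj),
    Finset.sup_insert, Finset.sup_insert, ← mm_singleton_left, ← mm_singleton_right]
  omega

open ETree in
/-- Let `S₁, S₂` be evolutionary trees with the same label set,
`P' = x₁,…,x_{p'}` a root path of `S₁` with no leaf of `S₁`, and `Q' = y₁,…,y_{q'}` a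
root path of `S₂` with no leaf of `S₂`.  For all `i < p'` and `j < q'` (regardless of
whether `(xᵢ,y_j)` is intersecting or not),
`rr(S₁^{xᵢ},S₂^{y_j}) = max { mm(Xᵢ,Y_j) + rr(S₁^{x_{i+1}},S₂^{y_{j+1}}),
mmb(Xᵢ∪{x_{i+1}}, Y_j∪{y_{j+1}}, x_{i+1}, y_{j+1}), rr(S₁^{xᵢ},S₂^{y_{j+1}}),
mm(xᵢ,Y_j), rr(S₁^{x_{i+1}},S₂^{y_j}), mm(Xᵢ,y_j) }`. -/
theorem rr_recurrence {L : Type} [DecidableEq L] (P Q : RootPath L)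
    (hS₁ : ETree.IsEvolutionary P.tree) (hS₂ : ETree.IsEvolutionary Q.tree)
    (hlab : ETree.labelSet P.tree = ETree.labelSet Q.tree)
    (i j : ℕ) (hi₁ : 1 ≤ i) (hi : i < P.len) (hj₁ : 1 ≤ j) (hj : j < Q.len) :
    rr (P.vert i) (Q.vert j) =
      max (mm (P.offPath i) (Q.offPath j) + rr (P.vert (i + 1)) (Q.vert (j + 1)))
      (max (mmb (insert (P.vert (i + 1)) (P.offPath i))
               (insert (Q.vert (j + 1)) (Q.offPath j))
               (P.vert (i + 1)) (Q.vert (j + 1)))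
      (max (rr (P.vert i) (Q.vert (j + 1)))
      (max (mm {P.vert i} (Q.offPath j))
      (max (rr (P.vert (i + 1)) (Q.vert j))
           (mm (P.offPath i) {Q.vert j}))))) :=
  rr_recurrence_general P Q hS₁ hS₂ i j hi₁ hi hj₁ hj
end

section
/- Let M1 = x_1,…,x_n and M2 = y_1,…,y_n be two sequences such that the symbols x_i are all distinct and the symbols y_j are all distinct, and let z_1, z_2 be two distinct symbols different from all x_i and y_j. Let T1 be the binary evolutionary tree formed from a path u_1,…,u_{n+1} rooted at u_1 by attaching a leaf labeled x_i to u_i for each i ∈ [1,n] and attaching two leaves labeled z_1 and z_2 to u_{n+1}; let T2 be formed symmetrically from a path v_1,…,v_{n+1} with leaf labels y_1,…,y_n, z_1, z_2. Then there is a one-to-one onto correspondence between the longest common subsequences of M1 and M2 and the maximum agreement subtrees of T1 and T2; in particular, rr(T1,T2) equals the length of a longest common subsequence of M1 and M2 plus 2. -/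
namespace ETree

/-- `buildTree z₁ z₂ [a₁,…,a_n]` is the binary evolutionary tree formed from a path
`u₁,…,u_{n+1}` rooted at `u₁` by attaching a leaf labeled `aᵢ` to `uᵢ` for each
`i ∈ [1,n]` and attaching two leaves labeled `z₁` and `z₂` to `u_{n+1}`. -/
def buildTree {L : Type} (z₁ z₂ : L) : List L → ETree L
  | [] => node [leaf z₁, leaf z₂]
  | a :: rest => node [leaf a, buildTree z₁ z₂ rest]

end ETree

/-!
Restricting `buildTree z₁ z₂ M` to a label set `s` gives the caterpillar whose leaves, read
from the root down, are the elements of `M ++ [z₁, z₂]` lying in `s`, and two caterpillars are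
isomorphic only if their leaf sequences agree up to swapping the two deepest leaves. A swap
cannot happen when `z₁` or `z₂` is kept, since that label is then the deepest leaf on both sides.
So an agreement set either consists of `z₁`, `z₂` and a common subsequence, or has at most one
element more than some common subsequence. Hence the maximum agreement sets are exactly the
sets `l ∪ {z₁, z₂}` for the longest common subsequences `l`.
-/

namespace List
variable {α : Type*}

theorem nodup_append_pair {z₁ z₂ : α} {M : List α} (hM : M.Nodup) (hz : z₁ ≠ z₂) (h₁ : z₁ ∉ M)
    (h₂ : z₂ ∉ M) : (M ++ [z₁, z₂]).Nodup := by
  simp only [nodup_append, nodup_cons, mem_singleton, not_mem_nil, nodup_nil, hM, hz]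
  aesop

noncomputable def lcsLength (M₁ M₂ : List α) : ℕ :=
  sSup {k | ∃ l : List α, l <+ M₁ ∧ l <+ M₂ ∧ l.length = k}

def IsLongestCommonSublist (l M₁ M₂ : List α) : Prop :=
  l <+ M₁ ∧ l <+ M₂ ∧ ∀ l' : List α, l' <+ M₁ → l' <+ M₂ → l'.length ≤ l.length

variable {l M₁ M₂ : List α}

theorem bddAbove_commonSublist_lengths (M₁ M₂ : List α) :
    BddAbove {k | ∃ l : List α, l <+ M₁ ∧ l <+ M₂ ∧ l.length = k} :=
  ⟨M₁.length, by rintro _ ⟨l, h, -, rfl⟩; exact h.length_le⟩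

theorem length_le_lcsLength (h₁ : l <+ M₁) (h₂ : l <+ M₂) : l.length ≤ lcsLength M₁ M₂ :=
  le_csSup (bddAbove_commonSublist_lengths M₁ M₂) ⟨l, h₁, h₂, rfl⟩

theorem exists_length_eq_lcsLength (M₁ M₂ : List α) :
    ∃ l, l <+ M₁ ∧ l <+ M₂ ∧ l.length = lcsLength M₁ M₂ := by
  refine Nat.sSup_mem ?_ (bddAbove_commonSublist_lengths M₁ M₂)
  exact ⟨0, [], nil_sublist _, nil_sublist _, rfl⟩

theorem isLongestCommonSublist_iff :
    IsLongestCommonSublist l M₁ M₂ ↔ l <+ M₁ ∧ l <+ M₂ ∧ l.length = lcsLength M₁ M₂ := by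
  refine ⟨fun ⟨h₁, h₂, hmax⟩ => ⟨h₁, h₂, (length_le_lcsLength h₁ h₂).antisymm ?_⟩,
    fun ⟨h₁, h₂, hlen⟩ => ⟨h₁, h₂, fun l' h₁' h₂' => hlen ▸ length_le_lcsLength h₁' h₂'⟩⟩
  obtain ⟨l₀, h₁, h₂, hlen⟩ := exists_length_eq_lcsLength M₁ M₂
  exact hlen ▸ hmax l₀ h₁ h₂

section
variable [DecidableEq α]

theorem filter_mem_toFinset_eq_of_sublist {w M : List α} (hM : M.Nodup) (h : w <+ M) :
    M.filter (· ∈ w.toFinset) = w := by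
  have hw := h.filter (· ∈ w.toFinset)
  rw [filter_eq_self.mpr (by simp)] at hw
  refine (hw.eq_of_length_le ?_).symm
  refine ((hM.filter _).subperm fun x hx => ?_).length_le
  simpa using (mem_filter.mp hx).2

theorem toFinset_filter_mem {s : Finset α} {A : List α} (h : s ⊆ A.toFinset) :
    (A.filter (· ∈ s)).toFinset = s := by
  ext x
  simpa using fun hx => mem_toFinset.mp (h hx)

theorem Nodup.length_filter_mem {s : Finset α} {A : List α} (hA : A.Nodup)
    (h : s ⊆ A.toFinset) : (A.filter (· ∈ s)).length = s.card := by
  rw [← toFinset_card_of_nodup (hA.filter _), toFinset_filter_mem h]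

end

end List

namespace ETree
open scoped List
variable {L : Type}

theorem Iso.refl : ∀ t : ETree L, Iso t t
  | .leaf a => Iso.leaf a
  | .node ts => Iso.node ts ts (Equiv.refl _) fun i => Iso.refl (ts.get i)
decreasing_by
  simp only [List.get_eq_getElem, ETree.node.sizeOf_spec]
  have := List.sizeOf_lt_of_mem (List.getElem_mem i.2)
  omega

theorem iso_node_pair {t₁ t₂ u₁ u₂ : ETree L} (h : Iso (node [t₁, t₂]) (node [u₁, u₂])) :
    (Iso t₁ u₁ ∧ Iso t₂ u₂) ∨ (Iso t₁ u₂ ∧ Iso t₂ u₁) := by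
  cases h with
  | node _ _ e he =>
    have hne : e 0 ≠ e 1 := e.injective.ne (by simp)
    have h₀ := he 0
    have h₁ := he 1
    generalize e 0 = i at *
    generalize e 1 = j at *
    fin_cases i <;> fin_cases j <;> simp_all

def caterpillar (a : L) : List L → ETree L
  | [] => leaf a
  | b :: r => node [leaf a, caterpillar b r]

def caterpillar? : List L → Option (ETree L)
  | [] => none
  | a :: r => some (caterpillar a r)

theorem caterpillar_eq_leaf {a b : L} {l : List L} (h : caterpillar a l = leaf b) :
    a = b ∧ l = [] := by
  cases l <;> simp_all [caterpillar]

theorem eq_leaf_of_iso_leaf {a : L} {t : ETree L} (h : Iso t (leaf a) ∨ Iso (leaf a) t) :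
    t = leaf a := by
  rcases h with h | h <;> cases h <;> rfl

theorem eq_or_swap_of_iso_caterpillar :
    ∀ {a b : L} {l m : List L}, Iso (caterpillar a l) (caterpillar b m) →
      a :: l = b :: m ∨ ∃ p x y, a :: l = p ++ [x, y] ∧ b :: m = p ++ [y, x]
  | a, b, [], m, h => by
    obtain ⟨rfl, rfl⟩ := caterpillar_eq_leaf (eq_leaf_of_iso_leaf (.inr h))
    exact .inl rfl
  | a, b, c :: l, [], h => by
    cases eq_leaf_of_iso_leaf (.inl h)
  | a, b, c :: l, d :: m, h => by
    rcases iso_node_pair h with ⟨hab, hcd⟩ | ⟨had, hcb⟩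
    · cases eq_leaf_of_iso_leaf (.inr hab)
      rcases eq_or_swap_of_iso_caterpillar hcd with heq | ⟨p, x, y, h₁, h₂⟩
      · exact .inl (by rw [heq])
      · exact .inr ⟨a :: p, x, y, by rw [h₁]; rfl, by rw [h₂]; rfl⟩
    · obtain ⟨rfl, rfl⟩ := caterpillar_eq_leaf (eq_leaf_of_iso_leaf (.inr had))
      obtain ⟨rfl, rfl⟩ := caterpillar_eq_leaf (eq_leaf_of_iso_leaf (.inl hcb))
      exact .inr ⟨[], _, _, rfl, rfl⟩

theorem eq_or_swap_of_isoO_caterpillar? {w₁ w₂ : List L}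
    (h : IsoO (caterpillar? w₁) (caterpillar? w₂)) :
    w₁ = w₂ ∨ ∃ p x y, x ≠ y ∧ w₁ = p ++ [x, y] ∧ w₂ = p ++ [y, x] := by
  match w₁, w₂, h with
  | [], [], _ => exact .inl rfl
  | a :: l, b :: m, h =>
    rcases eq_or_swap_of_iso_caterpillar h with heq | ⟨p, x, y, h₁, h₂⟩
    · exact .inl heq
    · by_cases hxy : x = y
      · exact .inl (by rw [h₁, h₂, hxy])
      · exact .inr ⟨p, x, y, hxy, h₁, h₂⟩

theorem isoO_caterpillar?_self (w : List L) : IsoO (caterpillar? w) (caterpillar? w) := by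
  cases w with
  | nil => trivial
  | cons a l => exact Iso.refl _

section
variable [DecidableEq L] {z₁ z₂ : L} {M M₁ M₂ l : List L} {s : Finset L}

theorem labelSet_buildTree (z₁ z₂ : L) (M : List L) :
    labelSet (buildTree z₁ z₂ M) = (M ++ [z₁, z₂]).toFinset := by
  suffices labelList (buildTree z₁ z₂ M) = M ++ [z₁, z₂] by rw [labelSet, this]
  induction M with
  | nil => simp [buildTree, labelList]
  | cons a r ih => simp_all [buildTree, labelList]

theorem restrict_buildTree (z₁ z₂ : L) (M : List L) (s : Finset L) :
    restrict (buildTree z₁ z₂ M) s = caterpillar? ((M ++ [z₁, z₂]).filter (· ∈ s)) := by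
  induction M with
  | nil =>
    by_cases h₁ : z₁ ∈ s <;> by_cases h₂ : z₂ ∈ s <;>
      simp [buildTree, restrict, h₁, h₂, caterpillar?, caterpillar]
  | cons a r ih =>
    simp only [buildTree, restrict, List.attach_cons, List.attach_nil, List.map_cons,
      List.map_nil, List.filterMap_cons, List.filterMap_nil, ih, List.cons_append, List.filter_cons]
    by_cases ha : a ∈ s <;>
      rcases (r ++ [z₁, z₂]).filter (· ∈ s) with _ | ⟨b, w⟩ <;> simp [ha, caterpillar?, caterpillar]

theorem filter_append_pair_mem_toFinset (hA : (M ++ [z₁, z₂]).Nodup) (hl : l <+ M) :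
    (M ++ [z₁, z₂]).filter (· ∈ (l ++ [z₁, z₂]).toFinset) = l ++ [z₁, z₂] :=
  List.filter_mem_toFinset_eq_of_sublist hA (hl.append_right _)

theorem restrict_buildTree_of_sublist (hA : (M ++ [z₁, z₂]).Nodup) (hl : l <+ M) :
    restrict (buildTree z₁ z₂ M) (l ++ [z₁, z₂]).toFinset = caterpillar? (l ++ [z₁, z₂]) := by
  rw [restrict_buildTree, filter_append_pair_mem_toFinset hA hl]

theorem filter_mem_toFinset_append_pair (hA : (M ++ [z₁, z₂]).Nodup) (hl : l <+ M) :
    M.filter (· ∈ (l ++ [z₁, z₂]).toFinset) = l := by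
  have h := filter_append_pair_mem_toFinset hA hl
  have hz : [z₁, z₂].filter (· ∈ (l ++ [z₁, z₂]).toFinset) = [z₁, z₂] := by simp
  rw [List.filter_append, hz] at h
  exact List.append_cancel_right h

theorem card_toFinset_append_pair (hA : (M ++ [z₁, z₂]).Nodup) (hl : l <+ M) :
    (l ++ [z₁, z₂]).toFinset.card = l.length + 2 := by
  rw [List.toFinset_card_of_nodup (hA.sublist (hl.append_right _)), List.length_append]
  rfl

theorem toFinset_append_pair_subset_labelSet (hl : l <+ M) :
    (l ++ [z₁, z₂]).toFinset ⊆ labelSet (buildTree z₁ z₂ M) := by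
  intro x hx
  rw [labelSet_buildTree, List.mem_toFinset] at *
  exact (hl.append_right _).subset hx

theorem isoO_restrict_buildTree_cases (hA : (M₁ ++ [z₁, z₂]).Nodup)
    (hs : s ⊆ labelSet (buildTree z₁ z₂ M₁))
    (hiso : IsoO (restrict (buildTree z₁ z₂ M₁) s) (restrict (buildTree z₁ z₂ M₂) s)) :
    (M₁.filter (· ∈ s) <+ M₂ ∧ (M₁.filter (· ∈ s) ++ [z₁, z₂]).toFinset = s) ∨
      ∃ l, l <+ M₁ ∧ l <+ M₂ ∧ s.card ≤ l.length + 1 := by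
  rw [labelSet_buildTree] at hs
  have hcard := hA.length_filter_mem hs
  have hset := List.toFinset_filter_mem hs
  rw [restrict_buildTree, restrict_buildTree, List.filter_append, List.filter_append] at hiso
  rw [List.filter_append] at hcard hset
  set t := [z₁, z₂].filter (· ∈ s)
  rcases eq_or_swap_of_isoO_caterpillar? hiso with heq | ⟨p, x, y, hxy, h₁, h₂⟩
  · have hc : M₁.filter (· ∈ s) = M₂.filter (· ∈ s) := List.append_cancel_right heq
    by_cases hpair : t = [z₁, z₂]
    · exact .inl ⟨hc ▸ List.filter_sublist, hpair ▸ hset⟩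
    · refine .inr ⟨M₁.filter (· ∈ s), List.filter_sublist, hc ▸ List.filter_sublist, ?_⟩
      have ht₂ : t.length ≠ 2 := fun h => hpair (List.filter_sublist.eq_of_length h)
      have ht_le : t.length ≤ 2 := List.filter_sublist.length_le
      rw [List.length_append] at hcard
      omega
  · have ht_nil : t = [] := by
      rcases List.eq_nil_or_concat t with ht | ⟨u, a, ht⟩
      · exact ht
      · have hy := congrArg List.getLast? h₁
        have hx := congrArg List.getLast? h₂
        simp [ht] at hx hy
        exact absurd (hx.symm.trans hy) hxy
    rw [ht_nil, List.append_nil] at h₁ h₂ hcard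
    refine .inr ⟨p ++ [x], ?_, ?_, ?_⟩
    · exact List.Sublist.trans (by simp) (h₁ ▸ List.filter_sublist : p ++ [x, y] <+ M₁)
    · exact List.Sublist.trans (by simp) (h₂ ▸ List.filter_sublist : p ++ [y, x] <+ M₂)
    · simp [← hcard, h₁]

theorem card_le_lcsLength_add_two (hA : (M₁ ++ [z₁, z₂]).Nodup)
    (hs : s ⊆ labelSet (buildTree z₁ z₂ M₁))
    (hiso : IsoO (restrict (buildTree z₁ z₂ M₁) s) (restrict (buildTree z₁ z₂ M₂) s)) :
    s.card ≤ List.lcsLength M₁ M₂ + 2 := by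
  rcases isoO_restrict_buildTree_cases hA hs hiso with ⟨hsub, hset⟩ | ⟨l, h₁, h₂, hle⟩
  · calc s.card = (M₁.filter (· ∈ s) ++ [z₁, z₂]).toFinset.card := by rw [hset]
      _ ≤ (M₁.filter (· ∈ s)).length + 2 :=
          (List.toFinset_card_le _).trans_eq (List.length_append ..)
      _ ≤ List.lcsLength M₁ M₂ + 2 := by
          gcongr; exact List.length_le_lcsLength List.filter_sublist hsub
  · have := List.length_le_lcsLength h₁ h₂
    omega

theorem isLongestCommonSublist_filter_mem (hA : (M₁ ++ [z₁, z₂]).Nodup)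
    (hs : s ⊆ labelSet (buildTree z₁ z₂ M₁))
    (hiso : IsoO (restrict (buildTree z₁ z₂ M₁) s) (restrict (buildTree z₁ z₂ M₂) s))
    (hcard : s.card = List.lcsLength M₁ M₂ + 2) :
    (M₁.filter (· ∈ s)).IsLongestCommonSublist M₁ M₂ ∧
      (M₁.filter (· ∈ s) ++ [z₁, z₂]).toFinset = s := by
  rcases isoO_restrict_buildTree_cases hA hs hiso with ⟨hsub, hset⟩ | ⟨l, h₁, h₂, hle⟩
  · refine ⟨List.isLongestCommonSublist_iff.mpr ⟨List.filter_sublist, hsub, ?_⟩, hset⟩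
    have := card_toFinset_append_pair hA (List.filter_sublist (p := (· ∈ s)) (l := M₁))
    rw [hset] at this
    omega
  · have := List.length_le_lcsLength h₁ h₂
    omega

theorem rr_buildTree (hA₁ : (M₁ ++ [z₁, z₂]).Nodup) (hA₂ : (M₂ ++ [z₁, z₂]).Nodup) :
    rr (buildTree z₁ z₂ M₁) (buildTree z₁ z₂ M₂) = List.lcsLength M₁ M₂ + 2 := by
  refine IsGreatest.csSup_eq ⟨?_, ?_⟩
  · obtain ⟨l, h₁, h₂, hlen⟩ := List.exists_length_eq_lcsLength M₁ M₂
    refine ⟨(l ++ [z₁, z₂]).toFinset, Finset.subset_inter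
      (toFinset_append_pair_subset_labelSet h₁) (toFinset_append_pair_subset_labelSet h₂),
      by rw [card_toFinset_append_pair hA₁ h₁, hlen], ?_⟩
    rw [restrict_buildTree_of_sublist hA₁ h₁, restrict_buildTree_of_sublist hA₂ h₂]
    exact isoO_caterpillar?_self _
  · rintro _ ⟨s, hs, rfl, hiso⟩
    exact card_le_lcsLength_add_two hA₁ (hs.trans Finset.inter_subset_left) hiso

def lcsEquivMaxAgreementSet (hA₁ : (M₁ ++ [z₁, z₂]).Nodup) (hA₂ : (M₂ ++ [z₁, z₂]).Nodup) :
    {l : List L // l.IsLongestCommonSublist M₁ M₂} ≃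
      {s : Finset L // s ⊆ labelSet (buildTree z₁ z₂ M₁) ∩ labelSet (buildTree z₁ z₂ M₂) ∧
        IsoO (restrict (buildTree z₁ z₂ M₁) s) (restrict (buildTree z₁ z₂ M₂) s) ∧
        s.card = rr (buildTree z₁ z₂ M₁) (buildTree z₁ z₂ M₂)} where
  toFun l := ⟨(l.1 ++ [z₁, z₂]).toFinset,
    Finset.subset_inter (toFinset_append_pair_subset_labelSet l.2.1)
      (toFinset_append_pair_subset_labelSet l.2.2.1),
    by rw [restrict_buildTree_of_sublist hA₁ l.2.1, restrict_buildTree_of_sublist hA₂ l.2.2.1]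
       exact isoO_caterpillar?_self _,
    by rw [card_toFinset_append_pair hA₁ l.2.1, rr_buildTree hA₁ hA₂,
         (List.isLongestCommonSublist_iff.mp l.2).2.2]⟩
  invFun s := ⟨M₁.filter (· ∈ s.1),
    (isLongestCommonSublist_filter_mem hA₁ (s.2.1.trans Finset.inter_subset_left) s.2.2.1
      (s.2.2.2.trans (rr_buildTree hA₁ hA₂))).1⟩
  left_inv l := Subtype.ext (filter_mem_toFinset_append_pair hA₁ l.2.1)
  right_inv s := Subtype.ext (isLongestCommonSublist_filter_mem hA₁
    (s.2.1.trans Finset.inter_subset_left) s.2.2.1 (s.2.2.2.trans (rr_buildTree hA₁ hA₂))).2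

end

end ETree

open ETree in
theorem lcs_mast_correspondence_general {L : Type} [DecidableEq L] (M₁ M₂ : List L)
    (hd₁ : M₁.Nodup) (hd₂ : M₂.Nodup)
    (z₁ z₂ : L) (hz : z₁ ≠ z₂)
    (hz₁₁ : z₁ ∉ M₁) (hz₁₂ : z₁ ∉ M₂) (hz₂₁ : z₂ ∉ M₁) (hz₂₂ : z₂ ∉ M₂) :
    Nonempty
      ({l : List L // l.Sublist M₁ ∧ l.Sublist M₂ ∧
          ∀ l' : List L, l'.Sublist M₁ → l'.Sublist M₂ → l'.length ≤ l.length} ≃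
       {s : Finset L // s ⊆ labelSet (buildTree z₁ z₂ M₁) ∩ labelSet (buildTree z₁ z₂ M₂) ∧
          IsoO (restrict (buildTree z₁ z₂ M₁) s) (restrict (buildTree z₁ z₂ M₂) s) ∧
          s.card = rr (buildTree z₁ z₂ M₁) (buildTree z₁ z₂ M₂)}) ∧
    rr (buildTree z₁ z₂ M₁) (buildTree z₁ z₂ M₂) =
      sSup {k | ∃ l : List L, l.Sublist M₁ ∧ l.Sublist M₂ ∧ l.length = k} + 2 := by
  have hA₁ := List.nodup_append_pair hd₁ hz hz₁₁ hz₂₁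
  have hA₂ := List.nodup_append_pair hd₂ hz hz₁₂ hz₂₂
  exact ⟨⟨lcsEquivMaxAgreementSet hA₁ hA₂⟩, rr_buildTree hA₁ hA₂⟩

open ETree in
/-- Let `M₁` and `M₂` be two sequences of length `n` of distinct
symbols, and `z₁ ≠ z₂` two further symbols occurring in neither sequence.  Let `T₁` and
`T₂` be the binary evolutionary trees built from `M₁` and `M₂` as above.  Then there is
a one-to-one onto correspondence between the longest common subsequences of `M₁` and
`M₂` and the maximum agreement subtrees of `T₁` and `T₂` (the latter identified with
the maximum-cardinality agreeing label sets); in particular `rr(T₁,T₂)` equals the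
length of a longest common subsequence of `M₁` and `M₂` plus `2`. -/
theorem lcs_mast_correspondence {L : Type} [DecidableEq L] (n : ℕ) (M₁ M₂ : List L)
    (h₁ : M₁.length = n) (h₂ : M₂.length = n) (hd₁ : M₁.Nodup) (hd₂ : M₂.Nodup)
    (z₁ z₂ : L) (hz : z₁ ≠ z₂)
    (hz₁₁ : z₁ ∉ M₁) (hz₁₂ : z₁ ∉ M₂) (hz₂₁ : z₂ ∉ M₁) (hz₂₂ : z₂ ∉ M₂) :
    Nonempty
      ({l : List L // l.Sublist M₁ ∧ l.Sublist M₂ ∧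
          ∀ l' : List L, l'.Sublist M₁ → l'.Sublist M₂ → l'.length ≤ l.length} ≃
       {s : Finset L // s ⊆ labelSet (buildTree z₁ z₂ M₁) ∩ labelSet (buildTree z₁ z₂ M₂) ∧
          IsoO (restrict (buildTree z₁ z₂ M₁) s) (restrict (buildTree z₁ z₂ M₂) s) ∧
          s.card = rr (buildTree z₁ z₂ M₁) (buildTree z₁ z₂ M₂)}) ∧
    rr (buildTree z₁ z₂ M₁) (buildTree z₁ z₂ M₂) =
      sSup {k | ∃ l : List L, l.Sublist M₁ ∧ l.Sublist M₂ ∧ l.length = k} + 2 :=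
  lcs_mast_correspondence_general M₁ M₂ hd₁ hd₂ z₁ z₂ hz hz₁₁ hz₁₂ hz₂₁ hz₂₂
end
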